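/- Let A be a real symmetric positive definite 2×2 matrix with eigenvalues 0 < λ1 ≤ λ2, let k > 0, and let 0 ≤ L < √(2kλ1)/λ2. For p ∈ ∂Ẽ_{A,k}, let n(p) = Ap/‖Ap‖ denote the outward unit normal to the ellipse at p. Then: (i) for every p ∈ ∂Ẽ_{A,k} and every 0 ≤ s ≤ L, the Euclidean distance from p − s·n(p) to ∂Ẽ_{A,k} equals s; and (ii) the map (p, s) ↦ p − s·n(p) is injective on ∂Ẽ_{A,k} × [0, L]; in particular the inward normal segments of length L based at distinct boundary points are pairwise disjoint. -/

import Mathlib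

/-!
For `x` on the same level set `{⟪T x, x⟫ = c}` as `p`, symmetry of `T` gives
`2⟪T p, x - p⟫ = -⟪T (x - p), x - p⟫`, so with `n = T p / ‖T p‖` and `⟪T v, v⟫ ≤ λ₂‖v‖²`,
`‖x - (p - s n)‖² = s² + ‖x - p‖² - (s / ‖T p‖) ⟪T (x - p), x - p⟫`
`                 ≥ s² + (1 - s λ₂ / ‖T p‖) ‖x - p‖²`.
When `s λ₂ < ‖T p‖` the bracket is positive, so `p` is the unique nearest point of the level set
to `p - s n`, at distance `s`; this gives both the distance formula and injectivity.
For `T = A` on the ellipse `q_A = k`, Cayley–Hamilton `A² = (λ₁ + λ₂) A - λ₁λ₂` and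
Cauchy–Schwarz give `λ₁‖v‖² ≤ ⟪A v, v⟫ ≤ λ₂‖v‖²` and `‖A p‖² ≥ λ₁ ⟪A p, p⟫ = 2kλ₁`, hence
`s λ₂ ≤ L λ₂ < √(2kλ₁) ≤ ‖A p‖`.
-/

open Matrix

/-- The quadratic form `q_A(x) = (1/2)xᵀAx`. -/
noncomputable def qA (A : Matrix (Fin 2) (Fin 2) ℝ) (x : EuclideanSpace ℝ (Fin 2)) : ℝ :=
  (1 / 2) * ((WithLp.equiv 2 (Fin 2 → ℝ) x) ⬝ᵥ A.mulVec (WithLp.equiv 2 (Fin 2 → ℝ) x))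

/-- `A·p`, viewed as a vector in the Euclidean plane. -/
noncomputable def mulPt (A : Matrix (Fin 2) (Fin 2) ℝ) (p : EuclideanSpace ℝ (Fin 2)) :
    EuclideanSpace ℝ (Fin 2) :=
  (WithLp.equiv 2 (Fin 2 → ℝ)).symm (A.mulVec (WithLp.equiv 2 (Fin 2 → ℝ) p))

/-- The outward unit normal `n(p) = Ap/‖Ap‖` to the ellipse `{q_A = k}` at `p`. -/
noncomputable def outNormal (A : Matrix (Fin 2) (Fin 2) ℝ) (p : EuclideanSpace ℝ (Fin 2)) :
    EuclideanSpace ℝ (Fin 2) :=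
  ‖mulPt A p‖⁻¹ • mulPt A p

open RealInnerProductSpace

lemma Metric.infDist_eq_dist_of_forall_le {α : Type*} [PseudoMetricSpace α] {S : Set α} {p q : α}
    (hp : p ∈ S) (h : ∀ x ∈ S, dist q p ≤ dist q x) : Metric.infDist q S = dist q p :=
  le_antisymm (Metric.infDist_le_dist_of_mem hp) ((Metric.le_infDist ⟨p, hp⟩).2 h)

namespace LinearMap.IsSymmetric

variable {E : Type*} [NormedAddCommGroup E] [InnerProductSpace ℝ E] {T : E →ₗ[ℝ] E} {a b : ℝ}

-- The hypothesis `hab` below says `(T - a)(T - b) = 0`: the eigenvalues of `T` lie in `{a, b}`.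

lemma norm_apply_sq_eq (hT : T.IsSymmetric) (hab : ∀ v, T (T v) = (a + b) • T v - (a * b) • v)
    (v : E) : ‖T v‖ ^ 2 = (a + b) * ⟪T v, v⟫ - a * b * ‖v‖ ^ 2 := by
  rw [← real_inner_self_eq_norm_sq, ← real_inner_self_eq_norm_sq, hT, real_inner_comm, hab,
    inner_sub_left, real_inner_smul_left, real_inner_smul_left]

lemma inner_apply_self_mem_Icc (hT : T.IsSymmetric)
    (hab : ∀ v, T (T v) = (a + b) • T v - (a * b) • v) (hle : a ≤ b) (v : E) :
    ⟪T v, v⟫ ∈ Set.Icc (a * ‖v‖ ^ 2) (b * ‖v‖ ^ 2) := by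
  have hCS : ⟪T v, v⟫ ^ 2 ≤ ‖T v‖ ^ 2 * ‖v‖ ^ 2 := by
    rw [← mul_pow, ← sq_abs]
    exact pow_le_pow_left₀ (abs_nonneg _) (abs_real_inner_le_norm _ _) 2
  have hprod : (⟪T v, v⟫ - a * ‖v‖ ^ 2) * (⟪T v, v⟫ - b * ‖v‖ ^ 2) ≤ 0 := by
    rw [norm_apply_sq_eq hT hab] at hCS
    linarith
  have hab' : a * ‖v‖ ^ 2 ≤ b * ‖v‖ ^ 2 := by gcongr
  constructor <;> nlinarith

lemma mul_inner_apply_self_le_norm_apply_sq (hT : T.IsSymmetric)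
    (hab : ∀ v, T (T v) = (a + b) • T v - (a * b) • v) (hle : a ≤ b) (hb : 0 ≤ b) (v : E) :
    a * ⟪T v, v⟫ ≤ ‖T v‖ ^ 2 := by
  have := (inner_apply_self_mem_Icc hT hab hle v).1
  rw [norm_apply_sq_eq hT hab]
  nlinarith

lemma two_inner_apply_sub_eq (hT : T.IsSymmetric) {p x : E} (h : ⟪T x, x⟫ = ⟪T p, p⟫) :
    2 * ⟪T p, x - p⟫ = -⟪T (x - p), x - p⟫ := by
  have hxp : ⟪T x, p⟫ = ⟪T p, x⟫ := by rw [hT, real_inner_comm]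
  simp only [map_sub, inner_sub_left, inner_sub_right]
  linarith

lemma norm_sub_sub_smul_normal_sq (hT : T.IsSymmetric) {p x : E} (hp : T p ≠ 0)
    (h : ⟪T x, x⟫ = ⟪T p, p⟫) (s : ℝ) :
    ‖x - (p - s • ‖T p‖⁻¹ • T p)‖ ^ 2 = ‖x - p‖ ^ 2 - s / ‖T p‖ * ⟪T (x - p), x - p⟫ + s ^ 2 := by
  rw [show x - (p - s • ‖T p‖⁻¹ • T p) = (x - p) + (s * ‖T p‖⁻¹) • T p by
      rw [mul_smul]; abel,
    norm_add_sq_real, real_inner_smul_right, real_inner_comm, norm_smul, mul_pow,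
    Real.norm_eq_abs, sq_abs]
  have hinv : (‖T p‖⁻¹) ^ 2 * ‖T p‖ ^ 2 = 1 := by field_simp
  linear_combination (s * ‖T p‖⁻¹) * two_inner_apply_sub_eq hT h + s ^ 2 * hinv

lemma sq_add_mul_le_norm_sub_sub_smul_normal_sq (hT : T.IsSymmetric)
    (hb : ∀ v, ⟪T v, v⟫ ≤ b * ‖v‖ ^ 2) {p x : E} (hp : T p ≠ 0) (h : ⟪T x, x⟫ = ⟪T p, p⟫)
    {s : ℝ} (hs : 0 ≤ s) :
    s ^ 2 + (1 - s * b / ‖T p‖) * ‖x - p‖ ^ 2 ≤ ‖x - (p - s • ‖T p‖⁻¹ • T p)‖ ^ 2 := by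
  rw [norm_sub_sub_smul_normal_sq hT hp h]
  have : s / ‖T p‖ * ⟪T (x - p), x - p⟫ ≤ s / ‖T p‖ * (b * ‖x - p‖ ^ 2) := by
    gcongr
    exact hb _
  rw [mul_div_right_comm]
  linarith

lemma norm_sub_smul_normal {p : E} (hp : T p ≠ 0) {s : ℝ} (hs : 0 ≤ s) :
    ‖p - (p - s • ‖T p‖⁻¹ • T p)‖ = s := by
  rw [sub_sub_cancel, norm_smul, norm_smul, norm_inv, norm_norm,
    inv_mul_cancel₀ (norm_ne_zero_iff.2 hp), Real.norm_of_nonneg hs, mul_one]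

theorem infDist_sub_smul_normal (hT : T.IsSymmetric) (hb : ∀ v, ⟪T v, v⟫ ≤ b * ‖v‖ ^ 2)
    {c : ℝ} {p : E} (hpc : ⟪T p, p⟫ = c) (hp : T p ≠ 0) {s : ℝ} (hs : 0 ≤ s)
    (hsb : s * b < ‖T p‖) :
    Metric.infDist (p - s • ‖T p‖⁻¹ • T p) {x | ⟪T x, x⟫ = c} = s := by
  have hN : 0 < ‖T p‖ := norm_pos_iff.2 hp
  have hcoef : 0 ≤ 1 - s * b / ‖T p‖ := by rw [sub_nonneg, div_le_one hN]; exact hsb.le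
  have hdist : dist (p - s • ‖T p‖⁻¹ • T p) p = s := by
    rw [dist_comm, dist_eq_norm, norm_sub_smul_normal hp hs]
  refine (Metric.infDist_eq_dist_of_forall_le (S := {x | ⟪T x, x⟫ = c}) hpc
    fun x hx => ?_).trans hdist
  rw [hdist, dist_comm, dist_eq_norm, ← pow_le_pow_iff_left₀ hs (norm_nonneg _) two_ne_zero]
  calc s ^ 2 ≤ s ^ 2 + (1 - s * b / ‖T p‖) * ‖x - p‖ ^ 2 := by
        have := sq_nonneg ‖x - p‖; nlinarith
    _ ≤ _ := sq_add_mul_le_norm_sub_sub_smul_normal_sq hT hb hp (hx.trans hpc.symm) hs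

theorem eq_and_eq_of_sub_smul_normal_eq (hT : T.IsSymmetric) (hb : ∀ v, ⟪T v, v⟫ ≤ b * ‖v‖ ^ 2)
    {c : ℝ} {p p' : E} (hpc : ⟪T p, p⟫ = c) (hp'c : ⟪T p', p'⟫ = c) (hp : T p ≠ 0)
    (hp' : T p' ≠ 0) {s s' : ℝ} (hs : 0 ≤ s) (hs' : 0 ≤ s') (hsb : s * b < ‖T p‖)
    (hs'b : s' * b < ‖T p'‖) (h : p - s • ‖T p‖⁻¹ • T p = p' - s' • ‖T p'‖⁻¹ • T p') :
    p = p' ∧ s = s' := by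
  obtain rfl : s = s' := by
    rw [← infDist_sub_smul_normal hT hb hpc hp hs hsb, h,
      infDist_sub_smul_normal hT hb hp'c hp' hs' hs'b]
  have hcoef : 0 < 1 - s * b / ‖T p‖ := by
    rw [sub_pos, div_lt_one (norm_pos_iff.2 hp)]; exact hsb
  have hle := sq_add_mul_le_norm_sub_sub_smul_normal_sq hT hb hp (hp'c.trans hpc.symm) hs
  rw [h, norm_sub_smul_normal hp' hs] at hle
  have hpp' : ‖p' - p‖ ^ 2 ≤ 0 := by nlinarith
  simpa [sub_eq_zero, eq_comm] using hpp'

end LinearMap.IsSymmetric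

lemma Matrix.mul_self_eq_trace_smul_sub_det_smul_fin_two {R : Type*} [CommRing R] [Nontrivial R]
    (A : Matrix (Fin 2) (Fin 2) R) : A * A = A.trace • A - A.det • 1 := by
  have hCH := A.aeval_self_charpoly
  rw [charpoly_fin_two] at hCH
  simp only [map_add, map_sub, map_mul, map_pow, Polynomial.aeval_X, Polynomial.aeval_C,
    Algebra.algebraMap_eq_smul_one, smul_mul_assoc, one_mul] at hCH
  rw [← sub_eq_zero, ← hCH, sq]
  abel

lemma Matrix.toEuclideanLin_apply_apply_fin_two {𝕜 : Type*} [RCLike 𝕜]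
    (A : Matrix (Fin 2) (Fin 2) 𝕜) (v : EuclideanSpace 𝕜 (Fin 2)) :
    toEuclideanLin A (toEuclideanLin A v) = A.trace • toEuclideanLin A v - A.det • v := by
  rw [← LinearMap.comp_apply, ← toLpLin_mul_same, mul_self_eq_trace_smul_sub_det_smul_fin_two]
  simp

lemma qA_eq_inner (A : Matrix (Fin 2) (Fin 2) ℝ) (x : EuclideanSpace ℝ (Fin 2)) :
    qA A x = ⟪toEuclideanLin A x, x⟫ / 2 := by
  rw [qA, EuclideanSpace.inner_eq_star_dotProduct]
  simp only [WithLp.equiv_apply, ofLp_toLpLin, toLin'_apply, star_trivial]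
  ring

lemma outNormal_eq (A : Matrix (Fin 2) (Fin 2) ℝ) (p : EuclideanSpace ℝ (Fin 2)) :
    outNormal A p = ‖toEuclideanLin A p‖⁻¹ • toEuclideanLin A p := rfl

theorem normal_collar_parametrization_general (A : Matrix (Fin 2) (Fin 2) ℝ)
    (hA : A.IsSymm) (l1 l2 : ℝ)
    (hl1 : 0 < l1) (hl12 : l1 ≤ l2)
    (htr : A.trace = l1 + l2) (hdet : A.det = l1 * l2)
    (k L : ℝ) (hLlt : L < Real.sqrt (2 * k * l1) / l2) :
    (∀ p : EuclideanSpace ℝ (Fin 2), qA A p = k → ∀ s : ℝ, 0 ≤ s → s ≤ L →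
        Metric.infDist (p - s • outNormal A p) {x : EuclideanSpace ℝ (Fin 2) | qA A x = k}
          = s) ∧
    (∀ p p' : EuclideanSpace ℝ (Fin 2), qA A p = k → qA A p' = k →
      ∀ s s' : ℝ, s ∈ Set.Icc 0 L → s' ∈ Set.Icc 0 L →
        p - s • outNormal A p = p' - s' • outNormal A p' → p = p' ∧ s = s') := by
  set T := toEuclideanLin A
  have hl2 : 0 < l2 := hl1.trans_le hl12
  have hT : T.IsSymmetric := isSymmetric_toEuclideanLin_iff.2 (isHermitian_iff_isSymm.2 hA)
  have hquad (v) : T (T v) = (l1 + l2) • T v - (l1 * l2) • v := by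
    rw [← htr, ← hdet, toEuclideanLin_apply_apply_fin_two]
  have hupper (v : EuclideanSpace ℝ (Fin 2)) : ⟪T v, v⟫ ≤ l2 * ‖v‖ ^ 2 :=
    (hT.inner_apply_self_mem_Icc hquad hl12 v).2
  have hS : {x | qA A x = k} = {x | ⟪T x, x⟫ = 2 * k} := by
    ext x; rw [Set.mem_ofPred, Set.mem_ofPred, qA_eq_inner, div_eq_iff two_ne_zero, mul_comm]
  have hregular {p : EuclideanSpace ℝ (Fin 2)} (hp : qA A p = k) {s : ℝ} (hs : s ∈ Set.Icc 0 L) :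
      ⟪T p, p⟫ = 2 * k ∧ T p ≠ 0 ∧ s * l2 < ‖T p‖ := by
    have hpk : ⟪T p, p⟫ = 2 * k := by rw [qA_eq_inner] at hp; linarith
    have hsqrt : Real.sqrt (2 * k * l1) ≤ ‖T p‖ := by
      rw [Real.sqrt_le_left (norm_nonneg _)]
      have := hT.mul_inner_apply_self_le_norm_apply_sq hquad hl12 hl2.le p
      rw [hpk] at this
      linarith
    have hsb : s * l2 < ‖T p‖ := calc
      s * l2 ≤ L * l2 := by gcongr; exact hs.2
      _ < Real.sqrt (2 * k * l1) := (lt_div_iff₀ hl2).1 hLlt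
      _ ≤ ‖T p‖ := hsqrt
    exact ⟨hpk, norm_pos_iff.1 ((mul_nonneg hs.1 hl2.le).trans_lt hsb), hsb⟩
  refine ⟨fun p hp s hs hsL => ?_, fun p p' hp hp' s s' hs hs' h => ?_⟩
  · obtain ⟨hpk, hp0, hsb⟩ := hregular hp ⟨hs, hsL⟩
    rw [hS, outNormal_eq]
    exact hT.infDist_sub_smul_normal hupper hpk hp0 hs hsb
  · obtain ⟨hpk, hp0, hsb⟩ := hregular hp hs
    obtain ⟨hp'k, hp'0, hs'b⟩ := hregular hp' hs'
    rw [outNormal_eq, outNormal_eq] at h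
    exact hT.eq_and_eq_of_sub_smul_normal_eq hupper hpk hp'k hp0 hp'0 hs.1 hs'.1 hsb hs'b h

theorem normal_collar_parametrization (A : Matrix (Fin 2) (Fin 2) ℝ)
    (hA : A.IsSymm) (hApd : A.PosDef) (l1 l2 : ℝ)
    (hl1 : 0 < l1) (hl12 : l1 ≤ l2)
    (htr : A.trace = l1 + l2) (hdet : A.det = l1 * l2)
    (k L : ℝ) (hk : 0 < k) (hL : 0 ≤ L) (hLlt : L < Real.sqrt (2 * k * l1) / l2) :
    (∀ p : EuclideanSpace ℝ (Fin 2), qA A p = k → ∀ s : ℝ, 0 ≤ s → s ≤ L →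
        Metric.infDist (p - s • outNormal A p) {x : EuclideanSpace ℝ (Fin 2) | qA A x = k}
          = s) ∧
    (∀ p p' : EuclideanSpace ℝ (Fin 2), qA A p = k → qA A p' = k →
      ∀ s s' : ℝ, s ∈ Set.Icc 0 L → s' ∈ Set.Icc 0 L →
        p - s • outNormal A p = p' - s' • outNormal A p' → p = p' ∧ s = s') :=
  normal_collar_parametrization_general A hA l1 l2 hl1 hl12 htr hdet k L hLlt
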